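/- A two-dimensional potential heuristic φ is consistent if and only if for every operator o: Δ_o^{ind} + Σ_{V ∉ vars(o)} max_{v ∈ dom(V)} Σ_{f = f_o ∧ (V,v)} w(f)·Δ_o(f_o) ≤ cost(o). -/

import Mathlib

attribute [local instance] Classical.propDecidable

abbrev PState (V : Type) (D : V → Type) := ∀ v, D v
abbrev PAssign (V : Type) (D : V → Type) := ∀ v, Option (D v)

def Models {V : Type} {D : V → Type} (s : PState V D) (f : PAssign V D) : Prop :=
  ∀ v, ∀ x ∈ f v, s v = x

def PModels {V : Type} {D : V → Type} (p f : PAssign V D) : Prop :=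
  ∀ v, ∀ x ∈ f v, p v = some x

structure Op (V : Type) (D : V → Type) where
  pre : PAssign V D
  eff : PAssign V D
  cost : ℝ
  tnf : ∀ v, (pre v).isSome ↔ (eff v).isSome
  cost_nonneg : 0 ≤ cost

def Op.applicable {V : Type} {D : V → Type} (o : Op V D) (s : PState V D) : Prop :=
  Models s o.pre

def Op.res {V : Type} {D : V → Type} (o : Op V D) (s : PState V D) : PState V D :=
  fun v => (o.eff v).getD (s v)

/-- The potential heuristic for features `F` and weights `w`. -/
noncomputable def pot {V : Type} {D : V → Type} [Fintype V]
    (F : Finset (PAssign V D)) (w : PAssign V D → ℝ) (s : PState V D) : ℝ :=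
  ∑ f ∈ F, if Models s f then w f else 0

/-- Restriction of a feature to the variables of `o`. -/
noncomputable def restrictO {V : Type} {D : V → Type} (o : Op V D) (f : PAssign V D) :
    PAssign V D :=
  fun v => if (o.pre v).isSome then f v else none

/-- `Δ_o^{ind}`: state-independent contribution of the context-independent features. -/
noncomputable def deltaInd {V : Type} {D : V → Type} [Fintype V]
    (o : Op V D) (F : Finset (PAssign V D)) (w : PAssign V D → ℝ) : ℝ :=
  ∑ f ∈ F.filter (fun f => ∀ v, (f v).isSome → (o.pre v).isSome),
    w f * ((if PModels o.pre f then (1 : ℝ) else 0) - (if PModels o.eff f then (1 : ℝ) else 0))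

/-- Inner sum of `w(f)·Δ_o(f_o)` over the context-dependent features `f = f_o ∧ (u,x)`. -/
noncomputable def innerSum {V : Type} {D : V → Type} [Fintype V]
    (o : Op V D) (F : Finset (PAssign V D)) (w : PAssign V D → ℝ)
    (u : V) (x : D u) : ℝ :=
  ∑ f ∈ F.filter (fun f => f u = some x ∧ ∃ v, (o.pre v).isSome ∧ (f v).isSome),
    w f * ((if PModels o.pre (restrictO o f) then (1 : ℝ) else 0) -
           (if PModels o.eff (restrictO o f) then (1 : ℝ) else 0))

/-!
For an applicable state `s`, the difference `φ(s) - φ(s⟦o⟧)` splits feature by feature. A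
feature inside `vars(o)` contributes the constant `w(f)·Δ_o(f)`, one disjoint from `vars(o)`
contributes nothing, and since features have at most two variables a remaining feature
`f = f_o ∧ (u, x)` has exactly one variable `u` outside `vars(o)` and contributes
`w(f)·Δ_o(f_o)` precisely when `s(u) = x`. Hence
`φ(s) - φ(s⟦o⟧) = Δ_o^{ind} + Σ_{u ∉ vars(o)} innerSum o u (s u)`, and because the values of an
applicable state outside `vars(o)` can be chosen independently, the largest difference is
obtained by maximising every summand separately.
-/

section

variable {V : Type} {D : V → Type}

namespace Op

theorem pre_eq_some_of_applicable (o : Op V D) {s : PState V D} (hs : o.applicable s) {v : V}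
    (hv : (o.pre v).isSome) : o.pre v = some (s v) := by
  obtain ⟨x, hx⟩ := Option.isSome_iff_exists.mp hv
  rw [hx, hs v x hx]

theorem eff_eq_some_res (o : Op V D) (s : PState V D) {v : V} (hv : (o.eff v).isSome) :
    o.eff v = some (o.res s v) := by
  obtain ⟨x, hx⟩ := Option.isSome_iff_exists.mp hv
  simp [Op.res, hx]

theorem res_of_not_isSome_pre (o : Op V D) (s : PState V D) {v : V}
    (hv : ¬(o.pre v).isSome) : o.res s v = s v := by
  have : o.eff v = none := Option.not_isSome_iff_eq_none.mp fun h => hv ((o.tnf v).mpr h)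
  simp [Op.res, this]

end Op

theorem models_iff_pModels {s : PState V D} {p f : PAssign V D}
    (h : ∀ v, (f v).isSome → p v = some (s v)) : Models s f ↔ PModels p f := by
  refine forall_congr' fun v => forall_congr' fun x => imp_congr_right fun hx => ?_
  rw [h v (Option.isSome_iff_exists.mpr ⟨x, hx⟩), Option.some_inj]

theorem isSome_pre_of_isSome_restrictO (o : Op V D) {f : PAssign V D} {v : V}
    (h : (restrictO o f v).isSome) : (o.pre v).isSome := by
  by_contra hv
  simp [restrictO, hv] at h

theorem models_iff_pModels_pre (o : Op V D) {s : PState V D} (hs : o.applicable s)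
    {f : PAssign V D} (hf : ∀ v, (f v).isSome → (o.pre v).isSome) :
    Models s f ↔ PModels o.pre f :=
  models_iff_pModels fun v hv => o.pre_eq_some_of_applicable hs (hf v hv)

theorem models_res_iff_pModels_eff (o : Op V D) (s : PState V D)
    {f : PAssign V D} (hf : ∀ v, (f v).isSome → (o.pre v).isSome) :
    Models (o.res s) f ↔ PModels o.eff f :=
  models_iff_pModels fun v hv => o.eff_eq_some_res s ((o.tnf v).mp (hf v hv))

theorem models_iff_of_unique_outside (o : Op V D) (s : PState V D) {f : PAssign V D}
    {u : V} {x : D u} (hfu : f u = some x)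
    (hout : ∀ v, (f v).isSome → ¬(o.pre v).isSome → v = u) :
    Models s f ↔ s u = x ∧ Models s (restrictO o f) := by
  constructor
  · intro h
    refine ⟨h u x hfu, fun v y hy => h v y ?_⟩
    by_cases hv : (o.pre v).isSome <;> simp_all [restrictO]
  · rintro ⟨hsu, h⟩ v y hy
    by_cases hv : (o.pre v).isSome
    · exact h v y (by simpa [restrictO, hv] using hy)
    · obtain rfl := hout v (Option.isSome_iff_exists.mpr ⟨y, hy⟩) hv
      rw [hfu, Option.mem_def, Option.some_inj] at hy
      rw [hsu, hy]

theorem eq_of_isSome_of_card_filter_isSome_le_two [Fintype V] {f : PAssign V D}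
    (hsize : (Finset.univ.filter fun v => (f v).isSome).card ≤ 2) {u v w : V}
    (hu : (f u).isSome) (hv : (f v).isSome) (hw : (f w).isSome) (huv : u ≠ v) (hwv : w ≠ v) :
    w = u := by
  by_contra hwu
  refine absurd (Finset.two_lt_card_iff.mpr ⟨w, u, v, ?_, ?_, ?_, hwu, hwv, huv⟩) hsize.not_gt <;>
    simpa

noncomputable def opDelta (o : Op V D) (g : PAssign V D) : ℝ :=
  (if PModels o.pre g then 1 else 0) - (if PModels o.eff g then 1 else 0)

theorem ite_models_sub_ite_models_res [Fintype V] (o : Op V D) {s : PState V D}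
    (hs : o.applicable s) (w : PAssign V D → ℝ) {f : PAssign V D}
    (hsize : (Finset.univ.filter fun v => (f v).isSome).card ≤ 2)
    (hf : ¬∀ v, (f v).isSome → (o.pre v).isSome) :
    (if Models s f then w f else 0) - (if Models (o.res s) f then w f else 0) =
      ∑ u ∈ Finset.univ.filter (fun v : V => ¬(o.pre v).isSome),
        if f u = some (s u) ∧ ∃ v, (o.pre v).isSome ∧ (f v).isSome
        then w f * opDelta o (restrictO o f) else 0 := by
  push Not at hf
  obtain ⟨u, hfu, hu⟩ := hf
  by_cases hmixed : ∃ v, (o.pre v).isSome ∧ (f v).isSome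
  · obtain ⟨v, hv, hfv⟩ := hmixed
    obtain ⟨x, hx⟩ := Option.isSome_iff_exists.mp hfu
    have hout : ∀ u', (f u').isSome → ¬(o.pre u').isSome → u' = u := fun u' hfu' hu' =>
      eq_of_isSome_of_card_filter_isSome_le_two hsize hfu hfv hfu'
        (fun h => hu (h ▸ hv)) (fun h => hu' (h ▸ hv))
    have hrestr : ∀ v, (restrictO o f v).isSome → (o.pre v).isSome :=
      fun _ => isSome_pre_of_isSome_restrictO o
    rw [Finset.sum_eq_single_of_mem u (by simpa using hu)]
    · simp only [hx, Option.some_inj]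
      rw [models_iff_of_unique_outside o s hx hout, models_iff_of_unique_outside o _ hx hout,
        o.res_of_not_isSome_pre s hu, models_iff_pModels_pre o hs hrestr,
        models_res_iff_pModels_eff o s hrestr]
      by_cases hsu : x = s u
      · simp only [hsu, true_and, opDelta]
        split_ifs <;> simp_all
      · simp [Ne.symm hsu, hsu]
    · intro u' hu' hne
      refine if_neg fun ⟨h, _⟩ => hne (hout u' ?_ (by simpa using hu'))
      simp [h]
  · have hres : Models (o.res s) f ↔ Models s f := by
      refine forall_congr' fun v => forall_congr' fun y => imp_congr_right fun hy => ?_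
      rw [o.res_of_not_isSome_pre s fun hv => hmixed ⟨v, hv, Option.isSome_iff_exists.mpr ⟨y, hy⟩⟩]
    rw [hres, sub_self]
    exact (Finset.sum_eq_zero fun _ _ => if_neg fun h => hmixed h.2).symm

theorem pot_sub_pot_res [Fintype V] (o : Op V D) (F : Finset (PAssign V D))
    (w : PAssign V D → ℝ)
    (hsize : ∀ f ∈ F, (Finset.univ.filter fun v => (f v).isSome).card ≤ 2)
    {s : PState V D} (hs : o.applicable s) :
    pot F w s - pot F w (o.res s) =
      deltaInd o F w +
        ∑ u ∈ Finset.univ.filter (fun v : V => ¬(o.pre v).isSome), innerSum o F w u (s u) := by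
  rw [pot, pot, ← Finset.sum_sub_distrib,
    ← Finset.sum_filter_add_sum_filter_not F fun f => ∀ v, (f v).isSome → (o.pre v).isSome]
  congr 1
  · refine Finset.sum_congr rfl fun f hf => ?_
    have hf := (Finset.mem_filter.mp hf).2
    rw [models_iff_pModels_pre o hs hf, models_res_iff_pModels_eff o s hf]
    split_ifs <;> ring
  · conv_rhs => simp only [innerSum, Finset.sum_filter (s := F)]; rw [Finset.sum_comm]
    rw [← Finset.sum_filter_of_ne (s := F)
      (p := fun f => ¬∀ v, (f v).isSome → (o.pre v).isSome) fun f _ hne hf => hne ?_]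
    · refine Finset.sum_congr rfl fun f hf => ?_
      rw [Finset.mem_filter] at hf
      exact ite_models_sub_ite_models_res o hs w (hsize f hf.1) hf.2
    · refine Finset.sum_eq_zero fun u hu => if_neg fun ⟨h, _⟩ => ?_
      exact (Finset.mem_filter.mp hu).2 (hf u (by simp [h]))

theorem Op.applicable_getD_pre (o : Op V D) (g : PState V D) :
    o.applicable fun v => (o.pre v).getD (g v) := fun v x hx => by
  simp [Option.mem_def.mp hx]

end

theorem stmt7_general {V : Type} {D : V → Type} [Fintype V]
    [∀ v, Fintype (D v)] [∀ v, Nonempty (D v)]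
    (Ops : Set (Op V D)) (F : Finset (PAssign V D)) (w : PAssign V D → ℝ)
    (hsize : ∀ f ∈ F, (Finset.univ.filter fun v => (f v).isSome).card ≤ 2) :
    (∀ o ∈ Ops, ∀ s : PState V D, o.applicable s →
        pot F w s - pot F w (o.res s) ≤ o.cost) ↔
    (∀ o ∈ Ops,
        deltaInd o F w +
          ∑ u ∈ Finset.univ.filter (fun v : V => ¬ (o.pre v).isSome),
            Finset.univ.sup' Finset.univ_nonempty (fun x : D u => innerSum o F w u x)
          ≤ o.cost) := by
  refine forall₂_congr fun o _ => ⟨fun hcons => ?_, fun hbound s hs => ?_⟩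
  · choose g _ hg using fun u : V =>
      Finset.univ.exists_mem_eq_sup' Finset.univ_nonempty (innerSum o F w u)
    set s : PState V D := fun v => (o.pre v).getD (g v)
    have hs : o.applicable s := o.applicable_getD_pre g
    calc _ = deltaInd o F w +
          ∑ u ∈ Finset.univ.filter (fun v : V => ¬ (o.pre v).isSome), innerSum o F w u (s u) := by
          refine congrArg _ (Finset.sum_congr rfl fun u hu => ?_)
          simp only [s, hg u, Option.not_isSome_iff_eq_none.mp (Finset.mem_filter.mp hu).2,
            Option.getD_none]
      _ = pot F w s - pot F w (o.res s) := (pot_sub_pot_res o F w hsize hs).symm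
      _ ≤ o.cost := hcons s hs
  · rw [pot_sub_pot_res o F w hsize hs]
    refine le_trans (add_le_add_right (Finset.sum_le_sum fun u _ => ?_) _) hbound
    exact Finset.le_sup' _ (Finset.mem_univ (s u))

/-- A two-dimensional potential heuristic is consistent iff for every operator `o`:
`Δ_o^{ind} + Σ_{V ∉ vars(o)} max_{v ∈ dom(V)} Σ_{f = f_o ∧ (V,v)} w(f)·Δ_o(f_o) ≤ cost(o)`. -/
theorem stmt7 {V : Type} {D : V → Type} [Fintype V] [DecidableEq V]
    [∀ v, Fintype (D v)] [∀ v, DecidableEq (D v)] [∀ v, Nonempty (D v)]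
    (Ops : Set (Op V D)) (F : Finset (PAssign V D)) (w : PAssign V D → ℝ)
    (hsize : ∀ f ∈ F, (Finset.univ.filter fun v => (f v).isSome).card ≤ 2) :
    (∀ o ∈ Ops, ∀ s : PState V D, o.applicable s →
        pot F w s - pot F w (o.res s) ≤ o.cost) ↔
    (∀ o ∈ Ops,
        deltaInd o F w +
          ∑ u ∈ Finset.univ.filter (fun v : V => ¬ (o.pre v).isSome),
            Finset.univ.sup' Finset.univ_nonempty (fun x : D u => innerSum o F w u x)
          ≤ o.cost) :=
  stmt7_general Ops F w hsize
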